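/- arXiv:2302.12289 — 6 statements merged into one kernel-verified Lean document; each statement's English description precedes it below -/
import Mathlib

section
/- Let X = (X_1, ..., X_d) be a random variable on {0,1}^d. If for all i ≠ j in [d], E[X_i X_j] ≤ ε E[X_i] E[X_j] for some 0 ≤ ε < 1, then ∑_{i=1}^d E[X_i] ≤ 1/(1-ε). -/
open MeasureTheory

theorem stmt0 {Ω : Type*} [MeasurableSpace Ω] (μ : Measure Ω) [IsProbabilityMeasure μ]
    (d : ℕ) (X : Fin d → Ω → ℝ)
    (hX01 : ∀ i ω, X i ω = 0 ∨ X i ω = 1)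
    (hmeas : ∀ i, Measurable (X i))
    (ε : ℝ) (hε0 : 0 ≤ ε) (hε1 : ε < 1)
    (hcorr : ∀ i j, i ≠ j → ∫ ω, X i ω * X j ω ∂μ ≤ ε * (∫ ω, X i ω ∂μ) * (∫ ω, X j ω ∂μ)) :
    ∑ i, ∫ ω, X i ω ∂μ ≤ 1 / (1 - ε) := by
  classical
  have hX0 : ∀ i ω, 0 ≤ X i ω := by
    intro i ω; rcases hX01 i ω with h | h <;> simp [h]
  have hX1 : ∀ i ω, X i ω ≤ 1 := by
    intro i ω; rcases hX01 i ω with h | h <;> simp [h]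
  have hint : ∀ i, Integrable (X i) μ := by
    intro i
    refine ⟨(hmeas i).aestronglyMeasurable, HasFiniteIntegral.of_bounded (C := 1) ?_⟩
    filter_upwards with ω
    rw [Real.norm_eq_abs, abs_le]
    exact ⟨by linarith [hX0 i ω], hX1 i ω⟩
  have hintp : ∀ i j, Integrable (fun ω => X i ω * X j ω) μ := by
    intro i j
    refine ⟨((hmeas i).mul (hmeas j)).aestronglyMeasurable,
      HasFiniteIntegral.of_bounded (C := 1) ?_⟩
    filter_upwards with ω
    rw [Real.norm_eq_abs, abs_le]
    constructor
    · nlinarith [hX0 i ω, hX0 j ω]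
    · nlinarith [hX0 i ω, hX1 i ω, hX0 j ω, hX1 j ω]
  set m : Fin d → ℝ := fun i => ∫ ω, X i ω ∂μ with hm
  have hm0 : ∀ i, 0 ≤ m i := fun i => integral_nonneg (fun ω => hX0 i ω)
  set S : ℝ := ∑ i, m i with hS
  have hS0 : 0 ≤ S := Finset.sum_nonneg fun i _ => hm0 i
  set f : Ω → ℝ := fun ω => ∑ i, X i ω with hf
  have hintf : Integrable f μ := integrable_finset_sum _ fun i _ => hint i
  have hintf2 : Integrable (fun ω => f ω * f ω) μ := by
    have : (fun ω => f ω * f ω) = fun ω => ∑ i, ∑ j, X i ω * X j ω := by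
      funext ω
      simp only [hf, Finset.sum_mul_sum]
    rw [this]
    exact integrable_finset_sum _ fun i _ => integrable_finset_sum _ fun j _ => hintp i j
  have hIf : ∫ ω, f ω ∂μ = S := by
    rw [hf]
    exact integral_finset_sum _ fun i _ => hint i
  -- second moment identity
  have hIf2 : ∫ ω, f ω * f ω ∂μ = ∑ i, ∑ j, ∫ ω, X i ω * X j ω ∂μ := by
    have h1 : (fun ω => f ω * f ω) = fun ω => ∑ i, ∑ j, X i ω * X j ω := by
      funext ω; simp only [hf, Finset.sum_mul_sum]
    rw [h1, integral_finset_sum _ fun i _ => integrable_finset_sum _ fun j _ => hintp i j]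
    exact Finset.sum_congr rfl fun i _ => integral_finset_sum _ fun j _ => hintp i j
  -- Cauchy-Schwarz / variance nonnegativity: S^2 ≤ ∫ f^2
  have hCS : S * S ≤ ∫ ω, f ω * f ω ∂μ := by
    have hnn : 0 ≤ ∫ ω, (f ω - S) * (f ω - S) ∂μ :=
      integral_nonneg fun ω => mul_self_nonneg _
    have hint1 : Integrable (fun ω => S * f ω) μ := hintf.const_mul S
    have hexp : ∫ ω, (f ω - S) * (f ω - S) ∂μ
        = (∫ ω, f ω * f ω ∂μ) - 2 * S * (∫ ω, f ω ∂μ) + S * S := by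
      have : (fun ω => (f ω - S) * (f ω - S))
          = fun ω => (f ω * f ω - 2 * S * f ω) + S * S := by
        funext ω; ring
      have hint2 : Integrable (fun ω => 2 * S * f ω) μ := hintf.const_mul (2 * S)
      calc ∫ ω, (f ω - S) * (f ω - S) ∂μ
          = ∫ ω, (f ω * f ω - 2 * S * f ω) + S * S ∂μ := by rw [this]
        _ = (∫ ω, f ω * f ω - 2 * S * f ω ∂μ) + ∫ ω, (S * S : ℝ) ∂μ :=
            integral_add (hintf2.sub hint2) (integrable_const _)
        _ = (∫ ω, f ω * f ω ∂μ) - (∫ ω, 2 * S * f ω ∂μ) + S * S := by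
            rw [integral_sub hintf2 hint2, integral_const]
            simp [measure_univ]
        _ = (∫ ω, f ω * f ω ∂μ) - 2 * S * (∫ ω, f ω ∂μ) + S * S := by
            rw [integral_const_mul]
    rw [hexp, hIf] at hnn
    nlinarith
  -- bound the second moment
  have hdiag : ∀ i, ∫ ω, X i ω * X i ω ∂μ = m i := by
    intro i
    have : (fun ω => X i ω * X i ω) = X i := by
      funext ω; rcases hX01 i ω with h | h <;> simp [h]
    rw [this]
  have hbound : ∫ ω, f ω * f ω ∂μ ≤ S + ε * (S * S) := by
    rw [hIf2]
    have hsplit : ∀ i : Fin d, ∑ j, ∫ ω, X i ω * X j ω ∂μ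
        ≤ m i + ∑ j ∈ Finset.univ.erase i, ε * (m i * m j) := by
      intro i
      rw [← Finset.add_sum_erase _ _ (Finset.mem_univ i), hdiag i]
      gcongr with j hj
      have := hcorr i j (Finset.ne_of_mem_erase hj).symm
      linarith [this]
    calc ∑ i, ∑ j, ∫ ω, X i ω * X j ω ∂μ
        ≤ ∑ i, (m i + ∑ j ∈ Finset.univ.erase i, ε * (m i * m j)) :=
          Finset.sum_le_sum fun i _ => hsplit i
      _ = S + ε * ∑ i, ∑ j ∈ Finset.univ.erase i, m i * m j := by
          rw [Finset.sum_add_distrib, Finset.mul_sum]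
          congr 1
          exact Finset.sum_congr rfl fun i _ => by rw [Finset.mul_sum]
      _ ≤ S + ε * (S * S) := by
          gcongr
          have : S * S = ∑ i, ∑ j, m i * m j := by
            rw [hS, Finset.sum_mul_sum]
          rw [this]
          refine Finset.sum_le_sum fun i _ => ?_
          refine Finset.sum_le_sum_of_subset_of_nonneg (Finset.erase_subset _ _) ?_
          intro j _ _
          exact mul_nonneg (hm0 i) (hm0 j)
  -- conclude
  have hkey : (1 - ε) * (S * S) ≤ S := by nlinarith
  rcases eq_or_lt_of_le hS0 with h | h
  · rw [← h]
    exact div_nonneg zero_le_one (by linarith)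
  · rw [le_div_iff₀ (by linarith)]
    nlinarith
end

section
/- Let S_1, ..., S_d ⊆ [n] be subsets with frac(S) := |S|/n. Suppose frac(⋃ S_i) = ε for some ε < 1, and for all i ≠ j, frac(S_i ∩ S_j) ≤ α · frac(S_i) · frac(S_j) for some α > 0 with αε < 1. Then ∑_{i=1}^d frac(S_i) ≤ ε/(1 - αε). -/
/-!
Let `m x` be the number of sets containing `x`. Then `∑ m = ∑ |S i|` and
`∑ m² = ∑_{i,j} |S i ∩ S j|`, so Cauchy–Schwarz on the union gives
`a² ≤ ε · ∑_{i,j} frac (S i ∩ S j)` for `a = ∑ frac (S i)`. The diagonal terms contribute `a`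
and the off-diagonal ones at most `α a²`, so `a² ≤ ε (a + α a²)`, i.e. `a (1 - α ε) ≤ ε`.
-/

open Finset

namespace Finset

variable {ι α : Type*} [DecidableEq α]

lemma card_eq_sum_ite_mem_of_subset {s t : Finset α} (h : s ⊆ t) :
    #s = ∑ x ∈ t, if x ∈ s then 1 else 0 := by
  rw [sum_ite_mem, inter_eq_right.2 h, card_eq_sum_ones]

theorem sq_sum_card_le_card_biUnion_mul_sum_sum_card_inter (s : Finset ι) (S : ι → Finset α) :
    (∑ i ∈ s, #(S i)) ^ 2 ≤ #(s.biUnion S) * ∑ i ∈ s, ∑ j ∈ s, #(S i ∩ S j) := by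
  set U := s.biUnion S
  let mult : α → ℕ := fun x ↦ ∑ i ∈ s, if x ∈ S i then 1 else 0
  have hsub : ∀ i ∈ s, S i ⊆ U := fun i hi ↦ subset_biUnion_of_mem S hi
  have hsum : ∑ i ∈ s, #(S i) = ∑ x ∈ U, mult x := by
    rw [sum_congr rfl fun i hi ↦ card_eq_sum_ite_mem_of_subset (hsub i hi)]
    exact sum_comm
  have hsq : ∑ i ∈ s, ∑ j ∈ s, #(S i ∩ S j) = ∑ x ∈ U, mult x ^ 2 := by
    calc ∑ i ∈ s, ∑ j ∈ s, #(S i ∩ S j)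
        = ∑ i ∈ s, ∑ j ∈ s, ∑ x ∈ U,
            (if x ∈ S i then 1 else 0) * (if x ∈ S j then 1 else 0) := by
          refine sum_congr rfl fun i hi ↦ sum_congr rfl fun j _ ↦ ?_
          simp only [card_eq_sum_ite_mem_of_subset (inter_subset_left.trans (hsub i hi)),
            mem_inter, ite_zero_mul_ite_zero, mul_one]
      _ = ∑ x ∈ U, mult x ^ 2 := by
          simp only [mult, sq, sum_mul_sum]
          exact (sum_congr rfl fun _ _ ↦ sum_comm).trans sum_comm
  rw [hsum, hsq]
  exact sq_sum_le_card_mul_sum_sq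

end Finset

lemma sum_sum_le_sum_add_mul_sq {ι : Type*} (s : Finset ι) [DecidableEq ι] {M : ι → ι → ℝ}
    {x : ι → ℝ} {α : ℝ} (hα : 0 ≤ α) (hx : ∀ i ∈ s, 0 ≤ x i) (hdiag : ∀ i ∈ s, M i i = x i)
    (hoff : ∀ i ∈ s, ∀ j ∈ s, i ≠ j → M i j ≤ α * x i * x j) :
    ∑ i ∈ s, ∑ j ∈ s, M i j ≤ ∑ i ∈ s, x i + α * (∑ i ∈ s, x i) ^ 2 := by
  have hrow : ∀ i ∈ s, ∀ j ∈ s, M i j ≤ (if i = j then x i else 0) + α * x i * x j := by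
    intro i hi j hj
    rcases eq_or_ne i j with rfl | hij
    · simpa [hdiag i hi] using mul_nonneg (mul_nonneg hα (hx i hi)) (hx i hi)
    · simpa [hij] using hoff i hi j hj hij
  calc ∑ i ∈ s, ∑ j ∈ s, M i j
      ≤ ∑ i ∈ s, ∑ j ∈ s, ((if i = j then x i else 0) + α * x i * x j) :=
        sum_le_sum fun i hi ↦ sum_le_sum fun j hj ↦ hrow i hi j hj
    _ = ∑ i ∈ s, x i + α * (∑ i ∈ s, x i) ^ 2 := by
        rw [sq, sum_mul_sum, mul_sum]
        simp only [sum_add_distrib, sum_ite_eq, sum_ite_mem, inter_self, mul_sum, mul_assoc]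

lemma le_div_one_sub_mul_of_sq_le {a ε α : ℝ} (ha : 0 ≤ a) (hε : 0 ≤ ε) (hαε : α * ε < 1)
    (h : a ^ 2 ≤ ε * (a + α * a ^ 2)) : a ≤ ε / (1 - α * ε) := by
  rw [le_div_iff₀ (by linarith)]
  rcases ha.eq_or_lt with rfl | ha
  · simpa using hε
  · nlinarith

theorem stmt1_general (n d : ℕ) (S : Fin d → Finset (Fin n)) (ε α : ℝ)
    (hUnion : ((Finset.univ.biUnion S).card : ℝ) / n = ε)
    (hα : 0 < α) (hαε : α * ε < 1)
    (hInt : ∀ i j, i ≠ j →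
      ((S i ∩ S j).card : ℝ) / n ≤ α * (((S i).card : ℝ) / n) * (((S j).card : ℝ) / n)) :
    ∑ i, ((S i).card : ℝ) / n ≤ ε / (1 - α * ε) := by
  have hε : 0 ≤ ε := hUnion ▸ by positivity
  have hCS : (∑ i, ((S i).card : ℝ) / n) ^ 2 ≤ ε * ∑ i, ∑ j, ((S i ∩ S j).card : ℝ) / n := by
    have h : ((∑ i, #(S i) : ℕ) : ℝ) ^ 2 / (n : ℝ) ^ 2
        ≤ ((#(univ.biUnion S) * ∑ i, ∑ j, #(S i ∩ S j) : ℕ) : ℝ) / (n : ℝ) ^ 2 := by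
      gcongr
      exact_mod_cast sq_sum_card_le_card_biUnion_mul_sum_sum_card_inter univ S
    rw [← hUnion]
    simp only [← sum_div]
    push_cast at h
    convert h using 1 <;> ring
  have hpair := sum_sum_le_sum_add_mul_sq univ hα.le (fun i _ ↦ by positivity)
    (fun i _ ↦ by rw [inter_self]) (fun i _ j _ hij ↦ hInt i j hij)
  exact le_div_one_sub_mul_of_sq_le (by positivity) hε hαε (hCS.trans (by gcongr))

theorem stmt1 (n d : ℕ) (hn : 0 < n) (S : Fin d → Finset (Fin n)) (ε α : ℝ)
    (hUnion : ((Finset.univ.biUnion S).card : ℝ) / n = ε)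
    (hε : ε < 1) (hα : 0 < α) (hαε : α * ε < 1)
    (hInt : ∀ i j, i ≠ j →
      ((S i ∩ S j).card : ℝ) / n ≤ α * (((S i).card : ℝ) / n) * (((S j).card : ℝ) / n)) :
    ∑ i, ((S i).card : ℝ) / n ≤ ε / (1 - α * ε) :=
  stmt1_general n d S ε α hUnion hα hαε hInt
end

section
/- Let f : ℝ → ℝ≥0 be a log-concave probability density with mean μ. Then f(μ) ≥ (1/8) · sup_x f(x). -/
/-!
Suppose `μ < z` and `f μ < f z`. Log-concavity gives `f ≥ f μ` on `[μ, z]` and, for `x ≤ μ`,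
`f x ≤ f μ · exp (-c (μ - x))` with `c = (log f z - log f μ) / (z - μ)`. Because the mean is
`μ`, the first moments of `f` about `μ` on either side of `μ` are equal; the right one is at
least `f μ (z - μ)² / 2` and the left one at most `f μ / c²`, whence `log (f z / f μ) ≤ √2`.
So `f z ≤ e^√2 f μ < 8 f μ` to the right of `μ`, and to the left by reflecting `f`. The case
`f μ = 0` cannot occur: `f` would vanish on one side of `μ`, and then the mean could not be `μ`.
-/

open MeasureTheory Set Real

def LogConcave (f : ℝ → ℝ) : Prop :=
  ∀ x y (l : ℝ), 0 ≤ l → l ≤ 1 → f (l * x + (1 - l) * y) ≥ f x ^ l * f y ^ (1 - l)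

namespace LogConcave

variable {f : ℝ → ℝ}

theorem comp_neg (hf : LogConcave f) : LogConcave fun x => f (-x) := by
  intro x y l hl0 hl1
  simpa only [neg_add, mul_neg] using hf (-x) (-y) l hl0 hl1

theorem apply_eq_zero_of_apply_eq_zero (hf : LogConcave f) (hf0 : ∀ x, 0 ≤ f x) {x y z : ℝ}
    (hxy : x < y) (hyz : y < z) (hy : f y = 0) (hz : 0 < f z) : f x = 0 := by
  set l := (z - y) / (z - x)
  have hl0 : 0 < l := div_pos (by linarith) (by linarith)
  have hl1 : l < 1 := (div_lt_one (by linarith)).2 (by linarith)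
  have hmid : l * x + (1 - l) * z = y := by
    have : z - x ≠ 0 := by linarith
    simp only [l]; field_simp; ring
  have key := hf x z l hl0.le hl1.le
  rw [hmid, hy] at key
  have hpow : f x ^ l = 0 :=
    le_antisymm (nonpos_of_mul_nonpos_left key (rpow_pos_of_pos hz _)) (rpow_nonneg (hf0 x) _)
  exact (rpow_eq_zero (hf0 x) hl0.ne').1 hpow

theorem le_apply_of_mem_Icc (hf : LogConcave f) (hf0 : ∀ x, 0 ≤ f x) {x y z : ℝ}
    (hyz : y < z) (hx : x ∈ Icc y z) (hle : f y ≤ f z) : f y ≤ f x := by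
  set s := (x - y) / (z - y)
  have hs0 : 0 ≤ s := div_nonneg (by linarith [hx.1]) (by linarith)
  have hs1 : s ≤ 1 := (div_le_one (by linarith)).2 (by linarith [hx.2])
  have hmid : s * z + (1 - s) * y = x := by
    have : z - y ≠ 0 := by linarith
    simp only [s]; field_simp; ring
  calc f y = f y ^ s * f y ^ (1 - s) := by
        rw [← rpow_add' (hf0 y) (by norm_num), add_sub_cancel, rpow_one]
    _ ≤ f z ^ s * f y ^ (1 - s) :=
        mul_le_mul_of_nonneg_right (rpow_le_rpow (hf0 y) hle hs0) (rpow_nonneg (hf0 y) _)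
    _ ≤ f x := hmid ▸ hf z y s hs0 hs1

theorem le_mul_exp (hf : LogConcave f) (hf0 : ∀ x, 0 ≤ f x) {x y z : ℝ}
    (hxy : x ≤ y) (hyz : y < z) (hy : 0 < f y) (hz : 0 < f z) :
    f x ≤ f y * exp (-((log (f z) - log (f y)) / (z - y) * (y - x))) := by
  rcases (hf0 x).eq_or_lt with hx0 | hx0
  · rw [← hx0]; positivity
  rcases hxy.eq_or_lt with rfl | hxy
  · simp
  set l := (z - y) / (z - x)
  have hl0 : 0 < l := div_pos (by linarith) (by linarith)
  have hl1 : l < 1 := (div_lt_one (by linarith)).2 (by linarith)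
  have hmid : l * x + (1 - l) * z = y := by
    have : z - x ≠ 0 := by linarith
    simp only [l]; field_simp; ring
  have key := hf x z l hl0.le hl1.le
  rw [hmid] at key
  have hlog : l * log (f x) + (1 - l) * log (f z) ≤ log (f y) := by
    have := log_le_log (by positivity) key
    rwa [log_mul (by positivity) (by positivity), log_rpow hx0, log_rpow hz] at this
  have hlog' : log (f x) ≤ log (f y) - (log (f z) - log (f y)) / (z - y) * (y - x) := by
    have hzy : 0 < z - y := by linarith
    have hzx : 0 < z - x := by linarith
    simp only [l] at hlog
    have h := mul_le_mul_of_nonneg_left hlog hzx.le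
    field_simp at h
    rw [div_mul_eq_mul_div, le_sub_iff_add_le, ← le_sub_iff_add_le', div_le_iff₀ hzy]
    linarith
  calc f x = exp (log (f x)) := (exp_log hx0).symm
    _ ≤ exp (log (f y) - (log (f z) - log (f y)) / (z - y) * (y - x)) := exp_le_exp.2 hlog'
    _ = f y * exp (-((log (f z) - log (f y)) / (z - y) * (y - x))) := by
      rw [sub_eq_add_neg, exp_add, exp_log hy]

end LogConcave

theorem integrableOn_Ici_mul_exp_neg_mul {c : ℝ} (hc : 0 < c) :
    IntegrableOn (fun t => t * exp (-(c * t))) (Ici 0) := by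
  rw [integrableOn_Ici_iff_integrableOn_Ioi]
  simpa using integrableOn_rpow_mul_exp_neg_mul_rpow (p := 1) (s := 1) (by norm_num) one_pos hc

theorem integral_Ioi_mul_exp_neg_mul {c : ℝ} (hc : 0 < c) :
    ∫ t in Ioi 0, t * exp (-(c * t)) = 1 / c ^ 2 := by
  have h := integral_rpow_mul_exp_neg_mul_Ioi two_pos hc
  norm_num [Gamma_two] at h
  rw [h, one_div]

theorem integrableOn_Iic_sub_mul_exp {c : ℝ} (hc : 0 < c) (b : ℝ) :
    IntegrableOn (fun x => (b - x) * exp (-(c * (b - x)))) (Iic b) := by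
  have hpre : (fun x => b - x) ⁻¹' Ici 0 = Iic b := by ext; simp
  rw [← hpre]
  exact ((Measure.measurePreserving_sub_left volume b).integrableOn_comp_preimage
    (Homeomorph.subLeft b).measurableEmbedding (f := fun t => t * exp (-(c * t)))).2
    (integrableOn_Ici_mul_exp_neg_mul hc)

theorem integral_Iic_sub_mul_exp {c : ℝ} (hc : 0 < c) (b : ℝ) :
    ∫ x in Iic b, (b - x) * exp (-(c * (b - x))) = 1 / c ^ 2 := by
  have hpre : (fun x => b - x) ⁻¹' Ici 0 = Iic b := by ext; simp
  rw [← hpre, (Measure.measurePreserving_sub_left volume b).setIntegral_preimage_emb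
    (Homeomorph.subLeft b).measurableEmbedding (fun t => t * exp (-(c * t))),
    integral_Ici_eq_integral_Ioi, integral_Ioi_mul_exp_neg_mul hc]

theorem setIntegral_Iic_sub_mul_le {f : ℝ → ℝ} {b c p : ℝ} (hf0 : ∀ x, 0 ≤ f x)
    (hc : 0 < c) (hbound : ∀ x ≤ b, f x ≤ p * exp (-(c * (b - x)))) :
    ∫ x in Iic b, (b - x) * f x ≤ p / c ^ 2 := by
  calc ∫ x in Iic b, (b - x) * f x
      ≤ ∫ x in Iic b, p * ((b - x) * exp (-(c * (b - x)))) := by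
        refine integral_mono_of_nonneg ?_ ((integrableOn_Iic_sub_mul_exp hc b).const_mul p) ?_
        · filter_upwards [ae_restrict_mem measurableSet_Iic] with x hx
          exact mul_nonneg (sub_nonneg.2 hx) (hf0 x)
        · filter_upwards [ae_restrict_mem measurableSet_Iic] with x hx
          rw [mul_left_comm]
          exact mul_le_mul_of_nonneg_left (hbound x hx) (sub_nonneg.2 hx)
    _ = p / c ^ 2 := by rw [integral_const_mul, integral_Iic_sub_mul_exp hc, mul_one_div]

theorem mul_sq_div_two_le_setIntegral_Ioi {f : ℝ → ℝ} {μ z p : ℝ} (hf0 : ∀ x, 0 ≤ f x)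
    (hI : IntegrableOn (fun x => (x - μ) * f x) (Ioi μ)) (hμz : μ ≤ z)
    (hp : ∀ x ∈ Icc μ z, p ≤ f x) :
    p * (z - μ) ^ 2 / 2 ≤ ∫ x in Ioi μ, (x - μ) * f x := by
  calc p * (z - μ) ^ 2 / 2 = ∫ x in Ioc μ z, (x - μ) * p := by
        rw [← intervalIntegral.integral_of_le hμz, intervalIntegral.integral_mul_const,
          intervalIntegral.integral_comp_sub_right (fun x => x), integral_id]
        ring
    _ ≤ ∫ x in Ioc μ z, (x - μ) * f x := by
        have hcont : Continuous fun x => (x - μ) * p := by fun_prop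
        refine setIntegral_mono_on hcont.integrableOn_Ioc (hI.mono_set Ioc_subset_Ioi_self)
          measurableSet_Ioc fun x hx => ?_
        exact mul_le_mul_of_nonneg_left (hp x (Ioc_subset_Icc_self hx)) (by linarith [hx.1])
    _ ≤ ∫ x in Ioi μ, (x - μ) * f x := by
        refine setIntegral_mono_set hI ?_ Ioc_subset_Ioi_self.eventuallyLE
        filter_upwards [ae_restrict_mem measurableSet_Ioi] with x hx
        exact mul_nonneg (sub_nonneg.2 (le_of_lt hx)) (hf0 x)

theorem setIntegral_Ioi_eq_setIntegral_Iic_of_integral_eq_zero {f : ℝ → ℝ} {μ : ℝ}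
    (hI : Integrable fun x => (x - μ) * f x) (h0 : ∫ x, (x - μ) * f x = 0) :
    ∫ x in Ioi μ, (x - μ) * f x = ∫ x in Iic μ, (μ - x) * f x := by
  have hsplit := intervalIntegral.integral_Iic_add_Ioi (b := μ) hI.integrableOn hI.integrableOn
  have hneg : ∫ x in Iic μ, (μ - x) * f x = -∫ x in Iic μ, (x - μ) * f x := by
    rw [← integral_neg]
    congr with x
    ring
  linarith

theorem integral_eq_zero_of_forall_lt_eq_zero {f : ℝ → ℝ} {μ : ℝ} (hf0 : ∀ x, 0 ≤ f x)
    (hI : Integrable fun x => (x - μ) * f x) (h0 : ∫ x, (x - μ) * f x = 0)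
    (hleft : ∀ x < μ, f x = 0) : ∫ x, f x = 0 := by
  have hnn : 0 ≤ fun x => (x - μ) * f x := fun x => by
    rcases lt_or_ge x μ with hx | hx
    · simp [hleft x hx]
    · exact mul_nonneg (sub_nonneg.2 hx) (hf0 x)
  have hae := (integral_eq_zero_iff_of_nonneg hnn hI).1 h0
  refine integral_eq_zero_of_ae ?_
  filter_upwards [hae, Measure.ae_ne volume μ] with x hx hxμ
  exact (mul_eq_zero.1 hx).resolve_left (sub_ne_zero.2 hxμ)

theorem integrable_sub_neg_mul_comp_neg {f : ℝ → ℝ} {μ : ℝ}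
    (hI : Integrable fun x => (x - μ) * f x) : Integrable fun x => (x - -μ) * f (-x) :=
  hI.comp_neg.neg.congr (ae_of_all _ fun x => by simp only [Pi.neg_apply]; ring)

theorem integral_sub_neg_mul_comp_neg (f : ℝ → ℝ) (μ : ℝ) :
    ∫ x, (x - -μ) * f (-x) = -∫ x, (x - μ) * f x := by
  rw [← integral_neg_eq_self (fun x => (x - μ) * f x), ← integral_neg]
  congr with x
  ring

theorem exp_sqrt_two_lt_eight : exp √2 < 8 := by
  calc exp √2 ≤ exp 2 := exp_le_exp.2 (sqrt_le_iff.2 ⟨by norm_num, by norm_num⟩)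
    _ = exp 1 ^ 2 := by rw [← exp_nat_mul]; norm_num
    _ < 2.7182818286 ^ 2 := by gcongr; exact exp_one_lt_d9
    _ < 8 := by norm_num

namespace LogConcave

variable {f : ℝ → ℝ} {μ z : ℝ}

theorem apply_pos_of_lt (hf : LogConcave f) (hf0 : ∀ x, 0 ≤ f x)
    (hI : Integrable fun x => (x - μ) * f x) (h0 : ∫ x, (x - μ) * f x = 0)
    (hne : ∫ x, f x ≠ 0) (hμz : μ < z) (hz : 0 < f z) : 0 < f μ := by
  refine (hf0 μ).lt_of_ne fun hμ => hne ?_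
  exact integral_eq_zero_of_forall_lt_eq_zero hf0 hI h0 fun x hx =>
    hf.apply_eq_zero_of_apply_eq_zero hf0 hx hμz hμ.symm hz

theorem apply_le_exp_sqrt_two_mul_of_lt (hf : LogConcave f) (hf0 : ∀ x, 0 ≤ f x)
    (hI : Integrable fun x => (x - μ) * f x) (h0 : ∫ x, (x - μ) * f x = 0)
    (hne : ∫ x, f x ≠ 0) (hμz : μ < z) : f z ≤ exp √2 * f μ := by
  rcases le_or_gt (f z) (f μ) with hle | hlt
  · exact hle.trans (le_mul_of_one_le_left (hf0 μ) (one_le_exp (sqrt_nonneg 2)))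
  have hμ : 0 < f μ := hf.apply_pos_of_lt hf0 hI h0 hne hμz ((hf0 μ).trans_lt hlt)
  have hz : 0 < f z := hμ.trans hlt
  set c := (log (f z) - log (f μ)) / (z - μ)
  have hc : 0 < c := div_pos (sub_pos.2 (log_lt_log hμ hlt)) (sub_pos.2 hμz)
  have hleft : ∫ x in Iic μ, (μ - x) * f x ≤ f μ / c ^ 2 :=
    setIntegral_Iic_sub_mul_le hf0 hc fun x hx => hf.le_mul_exp hf0 hx hμz hμ hz
  have hright : f μ * (z - μ) ^ 2 / 2 ≤ ∫ x in Ioi μ, (x - μ) * f x :=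
    mul_sq_div_two_le_setIntegral_Ioi hf0 hI.integrableOn hμz.le fun x hx =>
      hf.le_apply_of_mem_Icc hf0 hμz hx hlt.le
  rw [setIntegral_Ioi_eq_setIntegral_Iic_of_integral_eq_zero hI h0] at hright
  have hca : c * (z - μ) = log (f z) - log (f μ) := div_mul_cancel₀ _ (sub_ne_zero.2 hμz.ne')
  have hsq : (log (f z) - log (f μ)) ^ 2 ≤ 2 := by
    have h := hright.trans hleft
    rw [div_le_div_iff₀ two_pos (by positivity)] at h
    rw [← hca, mul_pow]
    nlinarith
  have hlog : log (f z) ≤ √2 + log (f μ) := by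
    linarith [le_abs_self (log (f z) - log (f μ)), abs_le_sqrt hsq]
  calc f z = exp (log (f z)) := (exp_log hz).symm
    _ ≤ exp (√2 + log (f μ)) := exp_le_exp.2 hlog
    _ = exp √2 * f μ := by rw [exp_add, exp_log hμ]

end LogConcave

theorem stmt4 (f : ℝ → ℝ) (hf0 : ∀ x, 0 ≤ f x)
    (hlc : ∀ x y (l : ℝ), 0 ≤ l → l ≤ 1 →
      f (l * x + (1 - l) * y) ≥ f x ^ l * f y ^ (1 - l))
    (hint : ∫ x, f x = 1) (hInt : Integrable f)
    (μ : ℝ) (hmeanInt : Integrable (fun x => x * f x)) (hmean : ∫ x, x * f x = μ) :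
    f μ ≥ (1 / 8) * ⨆ x, f x := by
  have hf : LogConcave f := hlc
  have hI : Integrable fun x => (x - μ) * f x :=
    (hmeanInt.sub (hInt.const_mul μ)).congr
      (ae_of_all _ fun x => by simp only [Pi.sub_apply]; ring)
  have h0 : ∫ x, (x - μ) * f x = 0 := by
    simp only [sub_mul]
    rw [integral_sub hmeanInt (hInt.const_mul μ), integral_const_mul, hint, hmean, mul_one,
      sub_self]
  have hne : ∫ x, f x ≠ 0 := hint ▸ one_ne_zero
  have hbound : ∀ z, f z ≤ exp √2 * f μ := by
    intro z
    rcases lt_trichotomy μ z with h | rfl | h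
    · exact hf.apply_le_exp_sqrt_two_mul_of_lt hf0 hI h0 hne h
    · exact le_mul_of_one_le_left (hf0 _) (one_le_exp (sqrt_nonneg 2))
    · simpa only [neg_neg] using hf.comp_neg.apply_le_exp_sqrt_two_mul_of_lt (fun x => hf0 (-x))
        (integrable_sub_neg_mul_comp_neg hI)
        (by rw [integral_sub_neg_mul_comp_neg, h0, neg_zero])
        (by rwa [integral_neg_eq_self]) (neg_lt_neg h)
  calc (1 / 8) * ⨆ x, f x ≤ (1 / 8) * (exp √2 * f μ) := by gcongr; exact ciSup_le hbound
    _ ≤ f μ := by nlinarith [exp_sqrt_two_lt_eight, hf0 μ]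
end

section
/- Let f : ℝ → ℝ≥0 be log-concave with M_n(f) := ∫_0^∞ t^n f(t) dt finite for all n. Then the sequence n ↦ M_n(f)/n! is log-concave, i.e., (M_n(f)/n!)² ≥ (M_{n-1}(f)/(n-1)!) · (M_{n+1}(f)/(n+1)!) for all n ≥ 1. -/
/-!
Write `a_k = M_k(f) / k!`. For an exponential `g t = c e^{-λ t}` one has `a_k(g) = c / λ^{k+1}`,
so equality holds for `g`; choose `c, λ` with `a_m(g) = a_m(f)` and `a_{m+1}(g) = a_{m+1}(f)`.
As `f` is log-concave and `g` log-affine, `{g ≤ f}` is an interval `[α, β]`, so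
`E = t^m (f - g)` satisfies `(t - α)(t - β) E(t) ≤ 0` on `(0, ∞)`. Since the first two moments of
`E` vanish, integrating gives `∫ t^2 E ≤ 0`, i.e. `a_{m+2}(f) ≤ a_{m+2}(g) = a_{m+1}^2 / a_m`.
When `{g ≤ f}` is unbounded, `(t - α) E(t) ≥ 0` has integral zero, so `E = 0` a.e.
-/

open MeasureTheory Set Real
open scoped Nat

lemma integral_pow_mul_exp_neg_mul_Ioi (k : ℕ) {l : ℝ} (hl : 0 < l) :
    ∫ t in Ioi (0 : ℝ), t ^ k * exp (-(l * t)) = k ! / l ^ (k + 1) := by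
  have key := integral_rpow_mul_exp_neg_mul_Ioi (a := k + 1) (by positivity) hl
  simp_rw [add_sub_cancel_right, rpow_natCast] at key
  rw [key, Gamma_nat_eq_factorial, one_div, inv_rpow hl.le, ← rpow_natCast]
  push_cast
  ring

lemma integrableOn_pow_mul_exp_neg_mul_Ioi (k : ℕ) {l : ℝ} (hl : 0 < l) :
    IntegrableOn (fun t : ℝ => t ^ k * exp (-(l * t))) (Ioi 0) :=
  .of_integral_ne_zero (by rw [integral_pow_mul_exp_neg_mul_Ioi k hl]; positivity)

lemma convex_setOf_mul_exp_le {f : ℝ → ℝ}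
    (hlc : ∀ x y (l : ℝ), 0 ≤ l → l ≤ 1 → f (l * x + (1 - l) * y) ≥ f x ^ l * f y ^ (1 - l))
    {c : ℝ} (hc : 0 < c) (l : ℝ) : Convex ℝ {t | c * exp (-(l * t)) ≤ f t} := by
  intro x hx y hy a b ha hb hab
  obtain rfl : b = 1 - a := by linarith
  simp only [mem_ofPred_eq, smul_eq_mul] at hx hy ⊢
  calc c * exp (-(l * (a * x + (1 - a) * y)))
      = (c * exp (-(l * x))) ^ a * (c * exp (-(l * y))) ^ (1 - a) := by
        rw [mul_rpow hc.le (exp_pos _).le, mul_rpow hc.le (exp_pos _).le, ← exp_mul, ← exp_mul,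
          mul_mul_mul_comm, ← rpow_add hc, add_sub_cancel, rpow_one, ← exp_add]
        ring_nf
    _ ≤ f x ^ a * f y ^ (1 - a) := by
        have hfx : 0 ≤ f x := (by positivity : 0 ≤ c * exp (-(l * x))).trans hx
        gcongr
    _ ≤ f (a * x + (1 - a) * y) := hlc x y a ha (by linarith)

lemma integral_sub_mul_sub_mul {μ : Measure ℝ} {E : ℝ → ℝ} (h0 : Integrable E μ)
    (h1 : Integrable (fun t => t * E t) μ) (h2 : Integrable (fun t => t ^ 2 * E t) μ) (a b : ℝ) :
    ∫ t, (t - a) * (t - b) * E t ∂μ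
      = ∫ t, t ^ 2 * E t ∂μ - (a + b) * ∫ t, t * E t ∂μ + a * b * ∫ t, E t ∂μ := by
  have hexp : (fun t => (t - a) * (t - b) * E t)
      = fun t => t ^ 2 * E t - (a + b) * (t * E t) + a * b * E t := by
    ext t
    ring
  rw [hexp, integral_add (h2.sub' (h1.const_mul _)) (h0.const_mul _),
    integral_sub h2 (h1.const_mul _), integral_const_mul, integral_const_mul]

lemma integral_sub_mul_sub_self_mul_eq_zero {μ : Measure ℝ} {E : ℝ → ℝ} {a : ℝ}
    (h0 : Integrable E μ) (h1 : Integrable (fun t => t * E t) μ)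
    (hE0 : ∫ t, E t ∂μ = 0) (hE1 : ∫ t, t * E t ∂μ = 0) (hK : ∀ᵐ t ∂μ, 0 ≤ (t - a) * E t) :
    ∫ t, (t - a) * (t - a) * E t ∂μ = 0 := by
  have hKint : Integrable (fun t => (t - a) * E t) μ := by
    simpa only [sub_mul] using h1.sub' (h0.const_mul a)
  have hKzero : ∫ t, (t - a) * E t ∂μ = 0 := by
    simp only [sub_mul]
    rw [integral_sub h1 (h0.const_mul a), integral_const_mul, hE0, hE1]
    ring
  have hKae : (fun t => (t - a) * E t) =ᵐ[μ] 0 :=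
    (integral_eq_zero_iff_of_nonneg_ae hK hKint).1 hKzero
  refine integral_eq_zero_of_ae ?_
  filter_upwards [hKae] with t ht
  simp only [Pi.zero_apply] at ht ⊢
  rw [mul_assoc, ht, mul_zero]

theorem integral_sq_mul_nonpos_of_ordConnected {μ : Measure ℝ} {s : Set ℝ} {E : ℝ → ℝ}
    (hs : ∀ᵐ t ∂μ, t ∈ s) (hsb : BddBelow s) (hconn : OrdConnected {t ∈ s | 0 ≤ E t})
    (h0 : Integrable E μ) (h1 : Integrable (fun t => t * E t) μ)
    (h2 : Integrable (fun t => t ^ 2 * E t) μ)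
    (hE0 : ∫ t, E t ∂μ = 0) (hE1 : ∫ t, t * E t ∂μ = 0) :
    ∫ t, t ^ 2 * E t ∂μ ≤ 0 := by
  suffices ∃ a b, ∫ t, (t - a) * (t - b) * E t ∂μ ≤ 0 by
    obtain ⟨a, b, h⟩ := this
    simpa [integral_sub_mul_sub_mul h0 h1 h2, hE0, hE1] using h
  set S := {t ∈ s | 0 ≤ E t}
  have hneg : ∀ t ∈ s, t ∉ S → E t < 0 := fun t ht htS => not_le.1 fun h => htS ⟨ht, h⟩
  have of_pointwise : ∀ a b, (∀ t ∈ s, (t - a) * (t - b) * E t ≤ 0) →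
      ∃ a b, ∫ t, (t - a) * (t - b) * E t ∂μ ≤ 0 :=
    fun a b h => ⟨a, b, integral_nonpos_of_ae (hs.mono h)⟩
  rcases S.eq_empty_or_nonempty with hS | hS
  · refine of_pointwise 0 0 fun t ht => ?_
    have := hneg t ht (hS ▸ notMem_empty t)
    nlinarith [mul_self_nonneg t]
  set a := sInf S
  have ha : ∀ t ∈ S, a ≤ t := fun t ht => csInf_le (hsb.mono (sep_subset s _)) ht
  have hmem : ∀ t ∈ s, a < t → (∃ u ∈ S, t < u) → t ∈ S := by
    rintro t ht hat ⟨u, hu, htu⟩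
    obtain ⟨v, hv, hvt⟩ := exists_lt_of_csInf_lt hS hat
    exact hconn.out hv hu ⟨hvt.le, htu.le⟩
  by_cases hSa : BddAbove S
  · set b := sSup S
    have hb : ∀ t ∈ S, t ≤ b := fun t ht => le_csSup hSa ht
    have hab : a ≤ b := csInf_le_csSup hS (hsb.mono (sep_subset s _)) hSa
    refine of_pointwise a b fun t ht => ?_
    by_cases htS : t ∈ S
    · exact mul_nonpos_of_nonpos_of_nonneg
        (mul_nonpos_of_nonneg_of_nonpos (sub_nonneg.2 (ha t htS)) (sub_nonpos.2 (hb t htS))) htS.2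
    · have hout : t ≤ a ∨ b ≤ t := by
        by_contra! h
        exact htS (hmem t ht h.1 (exists_lt_of_lt_csSup hS h.2))
      have hq : 0 ≤ (t - a) * (t - b) := by
        rcases hout with h | h
        · exact mul_nonneg_of_nonpos_of_nonpos (by linarith) (by linarith)
        · exact mul_nonneg (by linarith) (by linarith)
      exact mul_nonpos_of_nonneg_of_nonpos hq (hneg t ht htS).le
  · refine ⟨a, a, (integral_sub_mul_sub_self_mul_eq_zero h0 h1 hE0 hE1 (hs.mono ?_)).le⟩
    intro t ht
    by_cases htS : t ∈ S
    · exact mul_nonneg (sub_nonneg.2 (ha t htS)) htS.2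
    · have hta : t ≤ a := not_lt.1 fun h => htS (hmem t ht h (not_bddAbove_iff.1 hSa t))
      exact mul_nonneg_of_nonpos_of_nonpos (sub_nonpos.2 hta) (hneg t ht htS).le

noncomputable def halfLineMoment (f : ℝ → ℝ) (k : ℕ) : ℝ := ∫ t in Ioi 0, t ^ k * f t

lemma halfLineMoment_nonneg {f : ℝ → ℝ} (hf0 : ∀ x, 0 ≤ f x) (k : ℕ) :
    0 ≤ halfLineMoment f k :=
  setIntegral_nonneg measurableSet_Ioi fun t ht => mul_nonneg (pow_nonneg (le_of_lt ht) k) (hf0 t)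

lemma halfLineMoment_pos_iff {f : ℝ → ℝ} (hf0 : ∀ x, 0 ≤ f x) {k : ℕ}
    (hk : IntegrableOn (fun t => t ^ k * f t) (Ioi 0)) :
    0 < halfLineMoment f k ↔ 0 < volume (Function.support f ∩ Ioi 0) := by
  have hsupp : Function.support (fun t : ℝ => t ^ k * f t) ∩ Ioi 0
      = Function.support f ∩ Ioi 0 := by
    ext t
    simp +contextual [mem_Ioi, ne_of_gt]
  unfold halfLineMoment
  rw [setIntegral_pos_iff_support_of_nonneg_ae _ hk, hsupp]
  filter_upwards [ae_restrict_mem measurableSet_Ioi] with t ht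
  exact mul_nonneg (pow_nonneg (le_of_lt ht) k) (hf0 t)

lemma halfLineMoment_const_mul_exp_neg_mul (c : ℝ) {l : ℝ} (hl : 0 < l) (k : ℕ) :
    halfLineMoment (fun t => c * exp (-(l * t))) k = c * (k ! / l ^ (k + 1)) := by
  rw [halfLineMoment, ← integral_pow_mul_exp_neg_mul_Ioi k hl, ← integral_const_mul]
  congr with t
  ring

theorem halfLineMoment_add_two_le_of_exp_eq {f : ℝ → ℝ}
    (hlc : ∀ x y (l : ℝ), 0 ≤ l → l ≤ 1 → f (l * x + (1 - l) * y) ≥ f x ^ l * f y ^ (1 - l))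
    (hInt : ∀ n : ℕ, IntegrableOn (fun t => t ^ n * f t) (Ioi 0))
    {c l : ℝ} (hc : 0 < c) (hl : 0 < l) {m : ℕ}
    (hm : halfLineMoment (fun t => c * exp (-(l * t))) m = halfLineMoment f m)
    (hm1 : halfLineMoment (fun t => c * exp (-(l * t))) (m + 1) = halfLineMoment f (m + 1)) :
    halfLineMoment f (m + 2) ≤ halfLineMoment (fun t => c * exp (-(l * t))) (m + 2) := by
  set g : ℝ → ℝ := fun t => c * exp (-(l * t)) with hg_def
  have hg_int : ∀ k, IntegrableOn (fun t => t ^ k * g t) (Ioi 0) := fun k =>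
    IntegrableOn.congr_fun ((integrableOn_pow_mul_exp_neg_mul_Ioi k hl).const_mul c)
      (fun t _ => by simp only [hg_def]; ring) measurableSet_Ioi
  have hD_int : ∀ j, IntegrableOn (fun t => t ^ j * (t ^ m * (f t - g t))) (Ioi 0) := fun j =>
    IntegrableOn.congr_fun ((hInt (m + j)).sub' (hg_int (m + j))) (fun t _ => by ring)
      measurableSet_Ioi
  have hD_mom : ∀ j, ∫ t in Ioi 0, t ^ j * (t ^ m * (f t - g t))
      = halfLineMoment f (m + j) - halfLineMoment g (m + j) := fun j => by
    rw [halfLineMoment, halfLineMoment, ← integral_sub (hInt (m + j)) (hg_int (m + j))]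
    congr with t
    ring
  have hD_mom0 : ∫ t in Ioi 0, t ^ m * (f t - g t) = 0 := by
    simpa only [pow_zero, one_mul, add_zero, hm, sub_self] using hD_mom 0
  have hD_mom1 : ∫ t in Ioi 0, t * (t ^ m * (f t - g t)) = 0 := by
    simpa only [pow_one, hm1, sub_self] using hD_mom 1
  have hconn : OrdConnected {t ∈ Ioi 0 | 0 ≤ t ^ m * (f t - g t)} := by
    have hset : {t ∈ Ioi 0 | 0 ≤ t ^ m * (f t - g t)} = Ioi 0 ∩ {t | g t ≤ f t} := by
      ext t
      simp only [mem_inter_iff, mem_Ioi, mem_ofPred_eq]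
      refine and_congr_right fun ht => ?_
      rw [mul_nonneg_iff_of_pos_left (pow_pos ht m), sub_nonneg]
    rw [hset]
    exact ordConnected_Ioi.inter (convex_setOf_mul_exp_le hlc hc l).ordConnected
  have h := integral_sq_mul_nonpos_of_ordConnected (ae_restrict_mem measurableSet_Ioi)
    bddBelow_Ioi hconn (by simpa only [pow_zero, one_mul] using (hD_int 0).integrable)
    (by simpa only [pow_one] using (hD_int 1).integrable) (hD_int 2) hD_mom0 hD_mom1
  rw [hD_mom 2] at h
  linarith

theorem halfLineMoment_div_factorial_mul_le_sq {f : ℝ → ℝ} (hf0 : ∀ x, 0 ≤ f x)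
    (hlc : ∀ x y (l : ℝ), 0 ≤ l → l ≤ 1 → f (l * x + (1 - l) * y) ≥ f x ^ l * f y ^ (1 - l))
    (hInt : ∀ n : ℕ, IntegrableOn (fun t => t ^ n * f t) (Ioi 0)) (m : ℕ) :
    halfLineMoment f m / m ! * (halfLineMoment f (m + 2) / (m + 2)!)
      ≤ (halfLineMoment f (m + 1) / (m + 1)!) ^ 2 := by
  set a : ℕ → ℝ := fun k => halfLineMoment f k / (k ! : ℝ)
  have ha_pos_iff : ∀ k, 0 < a k ↔ 0 < volume (Function.support f ∩ Ioi 0) := fun k => by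
    rw [div_pos_iff_of_pos_right (by positivity), halfLineMoment_pos_iff hf0 (hInt k)]
  show a m * a (m + 2) ≤ a (m + 1) ^ 2
  have ha0 : 0 ≤ a m := div_nonneg (halfLineMoment_nonneg hf0 m) (by positivity)
  rcases ha0.eq_or_lt with h0 | hm
  · rw [← h0, zero_mul]
    positivity
  have hm1 : 0 < a (m + 1) := (ha_pos_iff _).2 ((ha_pos_iff m).1 hm)
  set l := a m / a (m + 1) with hl_def
  have hl : 0 < l := by positivity
  set c := a m * l ^ (m + 1) with hc_def
  have hc : 0 < c := by positivity
  have hg_mom : ∀ k, halfLineMoment (fun t => c * exp (-(l * t))) k / k ! = c / l ^ (k + 1) :=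
    fun k => by
      rw [halfLineMoment_const_mul_exp_neg_mul c hl k]
      field_simp
  have hcl : c / l ^ (m + 1) = a m := by
    rw [hc_def]
    field_simp
  have hgm : halfLineMoment (fun t => c * exp (-(l * t))) m = halfLineMoment f m := by
    rw [← div_left_inj' (by positivity : (m ! : ℝ) ≠ 0), hg_mom, hcl]
  have hgm1 : halfLineMoment (fun t => c * exp (-(l * t))) (m + 1) = halfLineMoment f (m + 1) := by
    rw [← div_left_inj' (by positivity : ((m + 1)! : ℝ) ≠ 0), hg_mom, pow_succ, ← div_div, hcl,
      hl_def, div_div_cancel₀ hm.ne']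
  have hgm2 : halfLineMoment (fun t => c * exp (-(l * t))) (m + 2) / (m + 2)!
      = a (m + 1) ^ 2 / a m := by
    rw [hg_mom, pow_succ, pow_succ, ← div_div, ← div_div, hcl, hl_def, div_div_cancel₀ hm.ne']
    field_simp
  calc a m * a (m + 2) ≤ a m * (a (m + 1) ^ 2 / a m) := by
        rw [← hgm2]
        gcongr
        exact div_le_div_of_nonneg_right
          (halfLineMoment_add_two_le_of_exp_eq hlc hInt hc hl hgm hgm1) (by positivity)
    _ = a (m + 1) ^ 2 := by field_simp

theorem stmt5 (f : ℝ → ℝ) (hf0 : ∀ x, 0 ≤ f x)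
    (hlc : ∀ x y (l : ℝ), 0 ≤ l → l ≤ 1 →
      f (l * x + (1 - l) * y) ≥ f x ^ l * f y ^ (1 - l))
    (hInt : ∀ n : ℕ, IntegrableOn (fun t => t ^ n * f t) (Ioi 0))
    (M : ℕ → ℝ) (hM : ∀ n, M n = ∫ t in Ioi 0, t ^ n * f t) :
    ∀ n : ℕ, 1 ≤ n →
      (M (n - 1) / (Nat.factorial (n - 1)) : ℝ) * (M (n + 1) / (Nat.factorial (n + 1)))
        ≤ (M n / (Nat.factorial n)) ^ 2 := by
  rintro (_ | m) hn
  · omega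
  simp only [Nat.add_sub_cancel, hM]
  exact halfLineMoment_div_factorial_mul_le_sq hf0 hlc hInt m
end

section
/- Let f be a one-dimensional log-concave probability density with mean 0 and variance σ², and let μ⁺ = E_f[Y | Y ≥ 0]. Then there exist universal constants c_1, c_2 > 0 (independent of f) such that c_1 σ ≤ μ⁺ ≤ c_2 σ. -/
/-!
Write `m = ∫_{x ≥ 0} x f` and `p = ∫_{x ≥ 0} f`, so that `μ⁺ = m / p`; as the mean vanishes,
`E|Y| = 2 m`.

The heart of the matter is the reverse Hölder inequality `σ² ≤ C (E|Y|)²` for log-concave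
densities. With `t = 2 E|Y|`, Markov's inequality puts mass at least `1/2` on `[-t, t]` and at most
`1/2` on `[2t, 11t]`, so `f ≥ 1/(4t)` at some point of the first interval and `f ≤ 1/(18t)` at some
point of the second. Having halved once, a log-concave function keeps decaying exponentially, at
rate `1/(18t)` beyond `11t`; hence both tails carry second moment `O(t²)`, and `σ ≤ 200 m`.

Cauchy–Schwarz on `[0, ∞)` gives `m² ≤ σ² p`. Therefore `p > 0` and
`σ / 200 ≤ m ≤ m / p ≤ σ² / m ≤ 200 σ`.
-/

open MeasureTheory Set Filter Real

lemma tendsto_pow_mul_exp_neg_sub_div_atTop (n : ℕ) (c : ℝ) {β : ℝ} (hβ : 0 < β) :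
    Tendsto (fun x => x ^ n * exp (-(x - c) / β)) atTop (nhds 0) := by
  have h := ((tendsto_pow_mul_exp_neg_atTop_nhds_zero n).comp
    (tendsto_id.atTop_div_const hβ)).const_mul (β ^ n * exp (c / β))
  rw [mul_zero] at h
  refine h.congr fun x => ?_
  simp only [Function.comp_apply, id]
  rw [div_pow, neg_div, sub_div, neg_sub, sub_eq_neg_add, exp_add]
  field_simp

/-- The second moment of the shifted exponential distribution `c + Exp(β)`. -/
lemma integral_Ioi_sq_mul_exp_neg_sub_div (c : ℝ) {β : ℝ} (hβ : 0 < β) :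
    IntegrableOn (fun x => x ^ 2 * (exp (-(x - c) / β) / β)) (Ioi c) ∧
      ∫ x in Ioi c, x ^ 2 * (exp (-(x - c) / β) / β) = c ^ 2 + 2 * β * c + 2 * β ^ 2 := by
  set g : ℝ → ℝ := fun x => -((x ^ 2 + 2 * β * x + 2 * β ^ 2) * exp (-(x - c) / β))
  have hderiv : ∀ x ∈ Ici c, HasDerivAt g (x ^ 2 * (exp (-(x - c) / β) / β)) x := by
    intro x _
    have hexp : HasDerivAt (fun x => exp (-(x - c) / β)) (exp (-(x - c) / β) * (-1 / β)) x := by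
      refine (hasDerivAt_exp _).comp x ?_
      simpa using (((hasDerivAt_id x).sub_const c).neg).div_const β
    have hpoly : HasDerivAt (fun x => x ^ 2 + 2 * β * x + 2 * β ^ 2) (2 * x + 2 * β) x := by
      simpa using (((hasDerivAt_pow 2 x).add ((hasDerivAt_id x).const_mul (2 * β))).add_const
        (2 * β ^ 2))
    refine (hpoly.mul hexp).neg.congr_deriv ?_
    field_simp
    ring
  have hnonneg : ∀ x ∈ Ioi c, 0 ≤ x ^ 2 * (exp (-(x - c) / β) / β) := fun x _ => by positivity
  have hlim : Tendsto g atTop (nhds 0) := by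
    have := (((tendsto_pow_mul_exp_neg_sub_div_atTop 2 c hβ).add
      ((tendsto_pow_mul_exp_neg_sub_div_atTop 1 c hβ).const_mul (2 * β))).add
      ((tendsto_pow_mul_exp_neg_sub_div_atTop 0 c hβ).const_mul (2 * β ^ 2))).neg
    simp only [mul_zero, add_zero, neg_zero] at this
    refine this.congr fun x => ?_
    simp only [g]
    ring
  refine ⟨integrableOn_Ioi_deriv_of_nonneg' hderiv hnonneg hlim, ?_⟩
  rw [integral_Ioi_of_hasDerivAt_of_nonneg' hderiv hnonneg hlim]
  simp [g]

lemma sq_integral_mul_le {α : Type*} [MeasurableSpace α] {μ : Measure α} {g w : α → ℝ}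
    (hw : 0 ≤ᵐ[μ] w) (hw_int : Integrable w μ) (hgw : Integrable (fun x => g x * w x) μ)
    (hg2w : Integrable (fun x => g x ^ 2 * w x) μ) :
    (∫ x, g x * w x ∂μ) ^ 2 ≤ (∫ x, g x ^ 2 * w x ∂μ) * ∫ x, w x ∂μ := by
  have hquad : ∀ u : ℝ, 0 ≤ (∫ x, w x ∂μ) * (u * u) + (-2 * ∫ x, g x * w x ∂μ) * u
      + ∫ x, g x ^ 2 * w x ∂μ := by
    intro u
    have hexpand : ∫ x, (g x - u) ^ 2 * w x ∂μ = (∫ x, g x ^ 2 * w x ∂μ)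
        - 2 * u * (∫ x, g x * w x ∂μ) + u ^ 2 * ∫ x, w x ∂μ := by
      have e : (fun x => (g x - u) ^ 2 * w x)
          = fun x => (g x ^ 2 * w x - 2 * u * (g x * w x)) + u ^ 2 * w x := by
        ext x; ring
      rw [e, integral_add, integral_sub, integral_const_mul, integral_const_mul]
      exacts [hg2w, hgw.const_mul _, hg2w.sub (hgw.const_mul _), hw_int.const_mul _]
    have : 0 ≤ ∫ x, (g x - u) ^ 2 * w x ∂μ :=
      integral_nonneg_of_ae (hw.mono fun x hx => mul_nonneg (sq_nonneg _) hx)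
    linarith
  have := discrim_le_zero hquad
  rw [discrim] at this
  linarith

lemma exists_mem_Icc_le_setIntegral_div {f : ℝ → ℝ} {a b : ℝ} (hab : a < b)
    (hf : IntegrableOn f (Icc a b)) : ∃ x ∈ Icc a b, f x ≤ (∫ x in Icc a b, f x) / (b - a) := by
  have hvol : volume (Icc a b) ≠ 0 := by simp [hab]
  obtain ⟨x, hx, h⟩ := exists_le_setAverage hvol measure_Icc_lt_top.ne hf
  refine ⟨x, hx, ?_⟩
  rwa [setAverage_eq, Real.volume_real_Icc_of_le hab.le, smul_eq_mul, inv_mul_eq_div] at h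

lemma exists_mem_Icc_setIntegral_div_le {f : ℝ → ℝ} {a b : ℝ} (hab : a < b)
    (hf : IntegrableOn f (Icc a b)) : ∃ x ∈ Icc a b, (∫ x in Icc a b, f x) / (b - a) ≤ f x := by
  have hvol : volume (Icc a b) ≠ 0 := by simp [hab]
  obtain ⟨x, hx, h⟩ := exists_setAverage_le hvol measure_Icc_lt_top.ne hf
  refine ⟨x, hx, ?_⟩
  rwa [setAverage_eq, Real.volume_real_Icc_of_le hab.le, smul_eq_mul, inv_mul_eq_div] at h

lemma mul_setIntegral_compl_Icc_le {f : ℝ → ℝ} (h0 : ∀ x, 0 ≤ f x) (hint : Integrable f)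
    (habs : Integrable fun x => |x| * f x) (t : ℝ) :
    t * ∫ x in (Icc (-t) t)ᶜ, f x ≤ ∫ x, |x| * f x := by
  rw [← integral_const_mul]
  calc ∫ x in (Icc (-t) t)ᶜ, t * f x ≤ ∫ x in (Icc (-t) t)ᶜ, |x| * f x := by
        refine setIntegral_mono_on (hint.const_mul t).integrableOn habs.integrableOn
          measurableSet_Icc.compl fun x hx => mul_le_mul_of_nonneg_right ?_ (h0 x)
        rw [mem_compl_iff, mem_Icc, not_and_or, not_le, not_le] at hx
        rcases hx with hx | hx
        · linarith [neg_le_abs x]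
        · linarith [le_abs_self x]
    _ ≤ ∫ x, |x| * f x :=
        setIntegral_le_integral habs (ae_of_all _ fun x => mul_nonneg (abs_nonneg x) (h0 x))

lemma setIntegral_compl_Icc_le_half {f : ℝ → ℝ} (h0 : ∀ x, 0 ≤ f x) (hint : Integrable f)
    (habs : Integrable fun x => |x| * f x) {t : ℝ} (ht : 0 < t)
    (hI : ∫ x, |x| * f x ≤ t / 2) :
    ∫ x in (Icc (-t) t)ᶜ, f x ≤ 1 / 2 := by
  refine le_of_mul_le_mul_left ?_ ht
  linarith [mul_setIntegral_compl_Icc_le h0 hint habs t]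

def IsLogConcave (f : ℝ → ℝ) : Prop :=
  ∀ x y (l : ℝ), 0 ≤ l → l ≤ 1 → f (l * x + (1 - l) * y) ≥ f x ^ l * f y ^ (1 - l)

namespace IsLogConcave

variable {f : ℝ → ℝ}

lemma comp_neg (hf : IsLogConcave f) : IsLogConcave fun x => f (-x) := by
  intro x y l hl0 hl1
  simpa only [neg_add, mul_neg] using hf (-x) (-y) l hl0 hl1

lemma sub_mul_log_add_sub_mul_log_le (hf : IsLogConcave f) {x₀ a x : ℝ} (hx₀a : x₀ < a)
    (hax : a < x) (hfx₀ : 0 < f x₀) (hfx : 0 < f x) :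
    0 < f a ∧ (a - x₀) * log (f x) + (x - a) * log (f x₀) ≤ (x - x₀) * log (f a) := by
  set l := (a - x₀) / (x - x₀)
  have hxx₀ : 0 < x - x₀ := by linarith
  have hl0 : 0 < l := div_pos (by linarith) hxx₀
  have hl1 : l < 1 := (div_lt_one hxx₀).2 (by linarith)
  have hcomb : l * x + (1 - l) * x₀ = a := by
    simp only [l]; field_simp; ring
  have key := hf x x₀ l hl0.le hl1.le
  rw [hcomb] at key
  have hprod : 0 < f x ^ l * f x₀ ^ (1 - l) := by positivity
  have hfa : 0 < f a := hprod.trans_le key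
  refine ⟨hfa, ?_⟩
  have hlog := log_le_log hprod key
  rw [log_mul (by positivity) (by positivity), log_rpow hfx, log_rpow hfx₀] at hlog
  have e : (x - x₀) * (l * log (f x) + (1 - l) * log (f x₀))
      = (a - x₀) * log (f x) + (x - a) * log (f x₀) := by
    simp only [l]; field_simp; ring
  rw [← e]
  exact mul_le_mul_of_nonneg_left hlog hxx₀.le

lemma le_mul_exp_of_two_mul_le (hf : IsLogConcave f) (h0 : ∀ x, 0 ≤ f x) {x₀ a x : ℝ}
    (hx₀a : x₀ < a) (hax : a ≤ x) (hfx₀ : 0 < f x₀) (h2 : 2 * f a ≤ f x₀) :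
    f x ≤ f a * exp (-((x - a) / (a - x₀) * log 2)) := by
  rcases (h0 x).eq_or_lt with hfx | hfx
  · rw [← hfx]; exact mul_nonneg (h0 a) (exp_pos _).le
  rcases hax.eq_or_lt with rfl | hax
  · simp
  obtain ⟨hfa, hconc⟩ := hf.sub_mul_log_add_sub_mul_log_le hx₀a hax hfx₀ hfx
  have hlog2 : log 2 + log (f a) ≤ log (f x₀) := by
    rw [← log_mul two_ne_zero hfa.ne']
    exact log_le_log (by positivity) h2
  have hslope : log (f x) ≤ log (f a) - (x - a) / (a - x₀) * log 2 := by
    have ha : 0 < a - x₀ := by linarith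
    rw [div_mul_eq_mul_div, le_sub_comm, div_le_iff₀ ha]
    linarith [mul_le_mul_of_nonneg_left hlog2 (sub_nonneg.2 hax.le)]
  calc f x = exp (log (f x)) := (exp_log hfx).symm
    _ ≤ exp (log (f a) - (x - a) / (a - x₀) * log 2) := exp_le_exp.2 hslope
    _ = f a * exp (-((x - a) / (a - x₀) * log 2)) := by
        rw [sub_eq_add_neg, exp_add, exp_log hfa]

lemma le_exp_neg_div_of_integral_abs_mul_le (hf : IsLogConcave f) (h0 : ∀ x, 0 ≤ f x)
    (hint : Integrable f) (hone : ∫ x, f x = 1) (habs : Integrable fun x => |x| * f x)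
    {t : ℝ} (ht : 0 < t) (hI : ∫ x, |x| * f x ≤ t / 2) {x : ℝ} (hx : 11 * t ≤ x) :
    f x ≤ exp (-(x - 11 * t) / (18 * t)) / (18 * t) := by
  have hout := setIntegral_compl_Icc_le_half h0 hint habs ht hI
  have hin : 1 / 2 ≤ ∫ y in Icc (-t) t, f y := by
    linarith [integral_add_compl (measurableSet_Icc (a := -t) (b := t)) hint]
  have hmid : ∫ y in Icc (2 * t) (11 * t), f y ≤ 1 / 2 := by
    refine (setIntegral_mono_set hint.integrableOn (ae_of_all _ h0) ?_).trans hout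
    exact Eventually.of_forall fun y hy hy' => by linarith [hy.1, hy'.2]
  obtain ⟨x₀, hx₀, hfx₀⟩ :=
    exists_mem_Icc_setIntegral_div_le (by linarith : -t < t) hint.integrableOn
  obtain ⟨a, ha, hfa⟩ :=
    exists_mem_Icc_le_setIntegral_div (by linarith : 2 * t < 11 * t) hint.integrableOn
  have hfx₀' : 1 / (4 * t) ≤ f x₀ := by
    refine le_trans ?_ hfx₀
    rw [le_div_iff₀ (by linarith)]
    linarith [show 1 / (4 * t) * (t - -t) = 1 / 2 by field_simp; ring]
  have hfa' : f a ≤ 1 / (18 * t) := by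
    refine hfa.trans ?_
    rw [div_le_iff₀ (by linarith)]
    linarith [show 1 / (18 * t) * (11 * t - 2 * t) = 1 / 2 by field_simp; ring]
  have hx₀a : x₀ < a := by linarith [hx₀.2, ha.1]
  have hdecay := hf.le_mul_exp_of_two_mul_le h0 hx₀a (ha.2.trans hx)
    ((by positivity : 0 < 1 / (4 * t)).trans_le hfx₀')
    (by linarith [show 2 * (1 / (18 * t)) ≤ 1 / (4 * t) by field_simp; norm_num])
  have hrate : (x - 11 * t) / (18 * t) ≤ (x - a) / (a - x₀) * log 2 := by
    calc (x - 11 * t) / (18 * t) = (x - 11 * t) / (12 * t) * (2 / 3) := by field_simp; ring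
      _ ≤ (x - a) / (a - x₀) * log 2 := by
        have hslope : (x - 11 * t) / (12 * t) ≤ (x - a) / (a - x₀) :=
          div_le_div₀ (by linarith [ha.2]) (by linarith [ha.2]) (by linarith)
            (by linarith [ha.2, hx₀.1])
        have hlog2 : (2 : ℝ) / 3 ≤ log 2 := by
          have := log_two_gt_d9; norm_num at this; linarith
        exact mul_le_mul hslope hlog2 (by norm_num)
          (div_nonneg (by linarith [ha.2]) (by linarith))
  calc f x ≤ f a * exp (-((x - a) / (a - x₀) * log 2)) := hdecay
    _ ≤ 1 / (18 * t) * exp (-(x - 11 * t) / (18 * t)) := by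
        refine mul_le_mul hfa' (exp_le_exp.2 ?_) (exp_pos _).le (by positivity)
        rw [neg_div]
        exact neg_le_neg hrate
    _ = exp (-(x - 11 * t) / (18 * t)) / (18 * t) := by ring

lemma setIntegral_Ioi_sq_mul_le (hf : IsLogConcave f) (h0 : ∀ x, 0 ≤ f x)
    (hint : Integrable f) (hone : ∫ x, f x = 1) (habs : Integrable fun x => |x| * f x)
    {t : ℝ} (ht : 0 < t) (hI : ∫ x, |x| * f x ≤ t / 2) :
    ∫ x in Ioi (11 * t), x ^ 2 * f x ≤ 1165 * t ^ 2 := by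
  obtain ⟨hexp_int, hexp⟩ :=
    integral_Ioi_sq_mul_exp_neg_sub_div (11 * t) (by positivity : 0 < 18 * t)
  calc ∫ x in Ioi (11 * t), x ^ 2 * f x
      ≤ ∫ x in Ioi (11 * t), x ^ 2 * (exp (-(x - 11 * t) / (18 * t)) / (18 * t)) := by
        refine integral_mono_of_nonneg (ae_of_all _ fun x => mul_nonneg (sq_nonneg x) (h0 x))
          hexp_int ((ae_restrict_iff' measurableSet_Ioi).2 (ae_of_all _ fun x hx => ?_))
        exact mul_le_mul_of_nonneg_left
          (hf.le_exp_neg_div_of_integral_abs_mul_le h0 hint hone habs ht hI (le_of_lt hx))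
          (sq_nonneg x)
    _ = 1165 * t ^ 2 := by rw [hexp]; ring

theorem integral_sq_mul_le (hf : IsLogConcave f) (h0 : ∀ x, 0 ≤ f x) (hint : Integrable f)
    (hone : ∫ x, f x = 1) (hint2 : Integrable fun x => x ^ 2 * f x)
    (habs : Integrable fun x => |x| * f x) :
    ∫ x, x ^ 2 * f x ≤ 9342 * (∫ x, |x| * f x) ^ 2 := by
  set I := ∫ x, |x| * f x
  have habs_nonneg : ∀ x, 0 ≤ |x| * f x := fun x => mul_nonneg (abs_nonneg x) (h0 x)
  have hsq : ∀ x, x ^ 2 * f x = |x| * (|x| * f x) := fun x => by rw [← sq_abs]; ring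
  rcases (integral_nonneg (f := fun x => |x| * f x) habs_nonneg).eq_or_lt with hI0 | hIpos
  · have hae := (integral_eq_zero_iff_of_nonneg habs_nonneg habs).1 hI0.symm
    rw [integral_eq_zero_of_ae (hae.mono fun x hx => by simp [hsq, hx])]
    positivity
  set t := 2 * I
  have ht : 0 < t := by positivity
  have hIt : I ≤ t / 2 := by simp [t]
  have hR := hf.setIntegral_Ioi_sq_mul_le h0 hint hone habs ht hIt
  have hL : ∫ x in Iic (-(11 * t)), x ^ 2 * f x ≤ 1165 * t ^ 2 := by
    have hone' : ∫ x, f (-x) = 1 := by rw [integral_neg_eq_self f volume, hone]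
    have habs' : Integrable fun x => |x| * f (-x) := by simpa using habs.comp_neg
    have hI' : ∫ x, |x| * f (-x) ≤ t / 2 := by
      simpa [abs_neg] using (integral_neg_eq_self (fun x => |x| * f x) volume).trans_le hIt
    have := hf.comp_neg.setIntegral_Ioi_sq_mul_le (fun x => h0 (-x)) hint.comp_neg hone' habs'
      ht hI'
    rw [← integral_comp_neg_Ioi]
    simpa [neg_sq] using this
  have hmid : ∫ x in Ioc (-(11 * t)) (11 * t), x ^ 2 * f x ≤ 11 * t * I := by
    calc ∫ x in Ioc (-(11 * t)) (11 * t), x ^ 2 * f x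
        ≤ ∫ x in Ioc (-(11 * t)) (11 * t), 11 * t * (|x| * f x) := by
          refine setIntegral_mono_on hint2.integrableOn (habs.const_mul _).integrableOn
            measurableSet_Ioc fun x hx => ?_
          rw [hsq]
          exact mul_le_mul_of_nonneg_right (abs_le.2 ⟨by linarith [hx.1], hx.2⟩) (habs_nonneg x)
      _ = 11 * t * ∫ x in Ioc (-(11 * t)) (11 * t), |x| * f x := integral_const_mul _ _
      _ ≤ 11 * t * I := by
          gcongr
          exact setIntegral_le_integral habs (Eventually.of_forall habs_nonneg)
  have hsplit := integral_add_compl (measurableSet_Iic (a := -(11 * t))) hint2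
  rw [compl_Iic, ← Ioc_union_Ioi_eq_Ioi (by linarith : -(11 * t) ≤ 11 * t),
    setIntegral_union Ioc_disjoint_Ioi_same measurableSet_Ioi hint2.integrableOn
      hint2.integrableOn] at hsplit
  have hconst : 1165 * t ^ 2 + 11 * t * I + 1165 * t ^ 2 = 9342 * I ^ 2 := by ring
  linarith

end IsLogConcave

lemma integral_abs_mul_eq_two_mul_setIntegral_Ici {f : ℝ → ℝ}
    (hxint : Integrable fun x => x * f x) (habs : Integrable fun x => |x| * f x)
    (hmean : ∫ x, x * f x = 0) :
    ∫ x, |x| * f x = 2 * ∫ x in Ici 0, x * f x := by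
  have habs_split := integral_add_compl (measurableSet_Ici (a := (0 : ℝ))) habs
  have hx_split := integral_add_compl (measurableSet_Ici (a := (0 : ℝ))) hxint
  rw [compl_Ici] at habs_split hx_split
  have hpos : ∫ x in Ici 0, |x| * f x = ∫ x in Ici 0, x * f x :=
    setIntegral_congr_fun measurableSet_Ici fun x hx => by rw [abs_of_nonneg hx]
  have hneg : ∫ x in Iio 0, |x| * f x = -∫ x in Iio 0, x * f x := by
    rw [← integral_neg]
    exact setIntegral_congr_fun measurableSet_Iio fun x hx => by rw [abs_of_neg hx]; ring
  linarith

theorem stmt6 :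
    ∃ c₁ c₂ : ℝ, 0 < c₁ ∧ 0 < c₂ ∧
      ∀ (f : ℝ → ℝ) (σ : ℝ), (∀ x, 0 ≤ f x) →
        (∀ x y (l : ℝ), 0 ≤ l → l ≤ 1 →
          f (l * x + (1 - l) * y) ≥ f x ^ l * f y ^ (1 - l)) →
        Integrable f → (∫ x, f x) = 1 →
        Integrable (fun x => x * f x) → (∫ x, x * f x) = 0 →
        Integrable (fun x => x ^ 2 * f x) → (∫ x, x ^ 2 * f x) = σ ^ 2 →
        0 < σ →
        c₁ * σ ≤ (∫ x in Ici (0 : ℝ), x * f x) / (∫ x in Ici (0 : ℝ), f x) ∧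
          (∫ x in Ici (0 : ℝ), x * f x) / (∫ x in Ici (0 : ℝ), f x) ≤ c₂ * σ := by
  refine ⟨1 / 200, 200, by norm_num, by norm_num, ?_⟩
  intro f σ h0 hf hint hone hxint hmean hint2 hvar hσ
  set m := ∫ x in Ici (0 : ℝ), x * f x
  set p := ∫ x in Ici (0 : ℝ), f x
  have habs : Integrable fun x => |x| * f x :=
    hxint.abs.congr (ae_of_all _ fun x => by simp [abs_mul, abs_of_nonneg (h0 x)])
  have hm0 : 0 ≤ m := setIntegral_nonneg measurableSet_Ici fun x hx => mul_nonneg hx (h0 x)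
  have hσm : σ ≤ 200 * m := by
    have h : σ ^ 2 ≤ 9342 * (2 * m) ^ 2 := by
      rw [← hvar, ← integral_abs_mul_eq_two_mul_setIntegral_Ici hxint habs hmean]
      exact IsLogConcave.integral_sq_mul_le hf h0 hint hone hint2 habs
    refine (pow_le_pow_iff_left₀ hσ.le (by positivity) two_ne_zero).1 ?_
    nlinarith [sq_nonneg m]
  have hm : 0 < m := by linarith
  have hCS : m ^ 2 ≤ σ ^ 2 * p := by
    refine (sq_integral_mul_le (ae_restrict_of_forall_mem measurableSet_Ici fun x _ => h0 x)
      hint.integrableOn hxint.integrableOn hint2.integrableOn).trans ?_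
    rw [← hvar]
    exact mul_le_mul_of_nonneg_right
      (setIntegral_le_integral hint2 (ae_of_all _ fun x => mul_nonneg (sq_nonneg x) (h0 x)))
      (setIntegral_nonneg measurableSet_Ici fun x _ => h0 x)
  have hp : 0 < p := pos_of_mul_pos_right ((pow_pos hm 2).trans_le hCS) (sq_nonneg σ)
  have hp1 : p ≤ 1 := hone ▸ setIntegral_le_integral hint (ae_of_all _ h0)
  constructor
  · calc 1 / 200 * σ ≤ m := by linarith
      _ ≤ m / p := le_div_self hm.le hp hp1
  · calc m / p ≤ σ ^ 2 / m := by rw [div_le_div_iff₀ hp hm, ← sq]; exact hCS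
      _ ≤ 200 * σ := by
        rw [div_le_iff₀ hm, sq]
        linarith [mul_le_mul_of_nonneg_left hσm hσ.le]
end

section
/- Let Y be a random variable distributed as a · x where x is uniform on the cube [-1,1]^d and a is a unit vector in ℝ^d. For any 0 ≤ t ≤ 1/2, there is a universal constant c > 0 such that E[Y | Y ≥ t] ≥ t + c. -/
/-!
Write `S x = ∑ i, a i * x i` and integrate over the cube `[-1, 1] ^ d`, of volume `2 ^ d`. As
`t ≤ 1/2`, `∫_{S ≥ t} (S - t) ≥ ∫ (S - 1/2)₊`, and a lower bound `2 ^ d / 64` for the latter gives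
`c = 1/64` after dividing by the volume of the slab `{S ≥ t}`, which is at most `2 ^ d`. The
symmetry `x ↦ -x` of the cube turns `2 ∫ (S - 1/2)₊` into `∫ (|S| - 1/2)₊`, and the pointwise bound
`(|u| - 1/2)₊ ≥ (16 u ^ 2 - 4 - u ^ 4) / 32` reduces everything to the moments
`∫ S ^ 2 = 2 ^ d / 3` and `∫ S ^ 4 ≤ 2 ^ d / 3`, obtained by induction on `d`, splitting off one
coordinate at a time.
-/

open MeasureTheory Set

noncomputable section

theorem integral_pi_fin_succ {α : Type*} [MeasurableSpace α] (ν : Measure α) [SigmaFinite ν]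
    {d : ℕ} {f : (Fin (d + 1) → α) → ℝ} (hf : Integrable f (Measure.pi fun _ => ν)) :
    ∫ x, f x ∂(Measure.pi fun _ => ν) =
      ∫ y, ∫ z, f (Fin.cons y z) ∂(Measure.pi fun _ => ν) ∂ν := by
  have e := (measurePreserving_piFinSuccAbove (fun _ : Fin (d + 1) => ν) 0).symm
  rw [← e.integral_comp (MeasurableEquiv.measurableEmbedding _) f]
  have hf' := (e.integrable_comp_emb (MeasurableEquiv.measurableEmbedding _)).2 hf
  refine (integral_prod _ hf').trans ?_
  simp only [MeasurableEquiv.piFinSuccAbove_symm_apply, Fin.insertNthEquiv_zero,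
    Function.comp_apply]
  rfl

theorem integral_Icc_neg_one_one_pow (k : ℕ) :
    ∫ y in Icc (-1 : ℝ) 1, y ^ k = (1 - (-1) ^ (k + 1)) / (k + 1) := by
  rw [integral_Icc_eq_integral_Ioc, ← intervalIntegral.integral_of_le (by norm_num), integral_pow]
  ring

theorem add_le_setIntegral_div_measure {α : Type*} [MeasurableSpace α] {μ : Measure α}
    {s : Set α} {f : α → ℝ} (hf : IntegrableOn f s μ) (hs : μ s ≠ ⊤) {t c M : ℝ} (hc : 0 < c)
    (hM : 0 < M) (hsM : (μ s).toReal ≤ M) (h : c * M ≤ ∫ x in s, (f x - t) ∂μ) :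
    t + c ≤ (∫ x in s, f x ∂μ) / (μ s).toReal := by
  have hsplit : ∫ x in s, f x ∂μ = ∫ x in s, (f x - t) ∂μ + t * (μ s).toReal := by
    rw [integral_sub hf (integrableOn_const hs), setIntegral_const, smul_eq_mul, measureReal_def]
    ring
  have hpos : 0 < (μ s).toReal := by
    refine ENNReal.toReal_pos (fun h0 => ?_) hs
    rw [Measure.restrict_eq_zero.2 h0, integral_zero_measure] at h
    nlinarith [mul_pos hc hM]
  rw [le_div_iff₀ hpos]
  nlinarith

theorem volume_cube (d : ℕ) : volume (univ.pi fun _ : Fin d => Icc (-1 : ℝ) 1) = 2 ^ d := by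
  rw [volume_pi_pi]
  simp only [Real.volume_Icc, Finset.prod_const, Finset.card_univ, Fintype.card_fin]
  norm_num

abbrev cubeMeasure (d : ℕ) : Measure (Fin d → ℝ) :=
  Measure.pi fun _ => volume.restrict (Icc (-1 : ℝ) 1)

namespace cubeMeasure

theorem eq_volume_restrict (d : ℕ) :
    cubeMeasure d = volume.restrict (univ.pi fun _ : Fin d => Icc (-1 : ℝ) 1) := by
  rw [volume_pi, Measure.restrict_pi_pi]

theorem real_univ (d : ℕ) : (cubeMeasure d).real univ = 2 ^ d := by
  rw [measureReal_def, eq_volume_restrict, Measure.restrict_apply_univ, volume_cube]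
  simp

theorem _root_.Continuous.integrable_cubeMeasure {d : ℕ} {f : (Fin d → ℝ) → ℝ}
    (hf : Continuous f) : Integrable f (cubeMeasure d) := by
  rw [eq_volume_restrict]
  exact hf.continuousOn.integrableOn_compact (isCompact_univ_pi fun _ => isCompact_Icc)

theorem measurePreserving_neg (d : ℕ) :
    MeasurePreserving Neg.neg (cubeMeasure d) (cubeMeasure d) := by
  refine measurePreserving_pi (f := fun _ (y : ℝ) => -y) _ _ fun _ => ⟨measurable_neg, ?_⟩
  have h : volume.restrict (Icc (-1 : ℝ) 1) = volume.restrict (Neg.neg ⁻¹' Icc (-1) 1) := by simp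
  conv_lhs =>
    rw [h, ← Measure.restrict_map measurable_neg measurableSet_Icc, Measure.map_neg_eq_self]

end cubeMeasure

theorem integral_comp_neg_sum_mul (d : ℕ) (a : Fin d → ℝ) (g : ℝ → ℝ) :
    ∫ x, g (-∑ i, a i * x i) ∂cubeMeasure d = ∫ x, g (∑ i, a i * x i) ∂cubeMeasure d := by
  have := (cubeMeasure.measurePreserving_neg d).integral_comp
    (MeasurableEquiv.neg _).measurableEmbedding fun x => g (∑ i, a i * x i)
  simpa only [Pi.neg_apply, mul_neg, Finset.sum_neg_distrib] using this

theorem integral_sum_mul_pow_succ (d k : ℕ) (a : Fin (d + 1) → ℝ) :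
    ∫ x, (∑ i, a i * x i) ^ k ∂cubeMeasure (d + 1) =
      ∑ j ∈ Finset.range (k + 1), k.choose j * a 0 ^ j * (∫ y in Icc (-1 : ℝ) 1, y ^ j) *
        ∫ z, (∑ i, a i.succ * z i) ^ (k - j) ∂cubeMeasure d := by
  have hinner (y : ℝ) : ∫ z, (a 0 * y + ∑ i, a i.succ * z i) ^ k ∂cubeMeasure d =
      ∑ j ∈ Finset.range (k + 1),
        (k.choose j * a 0 ^ j * ∫ z, (∑ i, a i.succ * z i) ^ (k - j) ∂cubeMeasure d) * y ^ j := by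
    simp_rw [add_pow]
    rw [integral_finsetSum _ fun j _ => (by fun_prop : Continuous _).integrable_cubeMeasure]
    refine Finset.sum_congr rfl fun j _ => ?_
    rw [integral_mul_const, integral_const_mul]
    ring
  rw [integral_pi_fin_succ _ (by fun_prop : Continuous _).integrable_cubeMeasure]
  simp only [Fin.sum_univ_succ, Fin.cons_zero, Fin.cons_succ, hinner]
  rw [integral_finsetSum _ fun j _ => (by fun_prop : Continuous _).integrableOn_Icc]
  simp_rw [integral_const_mul]
  exact Finset.sum_congr rfl fun j _ => by ring

theorem integral_sum_mul_sq (d : ℕ) (a : Fin d → ℝ) :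
    ∫ x, (∑ i, a i * x i) ^ 2 ∂cubeMeasure d = 2 ^ d / 3 * ∑ i, a i ^ 2 := by
  induction d with
  | zero => simp
  | succ d ih =>
    rw [integral_sum_mul_pow_succ, Fin.sum_univ_succ]
    simp only [Nat.reduceAdd, integral_Icc_neg_one_one_pow, Finset.sum_range_succ,
      Finset.range_one, Finset.sum_singleton, Nat.choose_zero_right, Nat.cast_one, pow_zero,
      mul_one, zero_add, pow_one, sub_neg_eq_add, CharP.cast_eq_zero, div_one, one_mul, tsub_zero,
      ih, Nat.choose_succ_self_right, Nat.cast_ofNat, even_two, Even.neg_pow, one_pow, sub_self,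
      zero_div, mul_zero, Nat.add_one_sub_one, zero_mul, add_zero, Nat.choose_self, tsub_self,
      integral_const, cubeMeasure.real_univ, smul_eq_mul]
    ring

theorem integral_sum_mul_pow_four_le (d : ℕ) (a : Fin d → ℝ) :
    ∫ x, (∑ i, a i * x i) ^ 4 ∂cubeMeasure d ≤ 2 ^ d / 3 * (∑ i, a i ^ 2) ^ 2 := by
  induction d with
  | zero => simp
  | succ d ih =>
    rw [integral_sum_mul_pow_succ, Fin.sum_univ_succ]
    simp only [Nat.reduceAdd, integral_Icc_neg_one_one_pow, Finset.sum_range_succ,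
      Finset.range_one, Finset.sum_singleton, Nat.choose_zero_right, Nat.cast_one, pow_zero,
      mul_one, zero_add, pow_one, sub_neg_eq_add, CharP.cast_eq_zero, div_one, one_mul, tsub_zero,
      Nat.choose_one_right, Nat.cast_ofNat, even_two, Even.neg_pow, one_pow, sub_self, zero_div,
      mul_zero, Nat.add_one_sub_one, zero_mul, add_zero, Nat.choose_two_right, Nat.reduceMul,
      Nat.reduceDiv, Nat.reduceSub, integral_sum_mul_sq, Nat.choose_succ_self_right,
      Nat.choose_self, tsub_self, integral_const, cubeMeasure.real_univ, smul_eq_mul,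
      pow_succ (2 : ℝ) d]
    have hQ : 0 ≤ ∑ i : Fin d, a i.succ ^ 2 := Finset.sum_nonneg fun i _ => sq_nonneg _
    have h2d : (0 : ℝ) < 2 ^ d := by positivity
    nlinarith [ih fun i : Fin d => a i.succ, mul_nonneg h2d.le (pow_two_nonneg (a 0 ^ 2)),
      mul_nonneg (mul_nonneg h2d.le (sq_nonneg (a 0))) hQ]

theorem quartic_le_max_sub_half_add_max_neg_sub_half (u : ℝ) :
    (16 * u ^ 2 - 4 - u ^ 4) / 32 ≤ max (u - 1 / 2) 0 + max (-u - 1 / 2) 0 := by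
  wlog hu : 0 ≤ u generalizing u
  · rw [add_comm]
    simpa [Even.neg_pow (by decide : Even 4)] using this (-u) (by linarith)
  rw [max_eq_right (a := -u - 1 / 2) (by linarith), add_zero]
  rcases le_total u (1 / 2) with h | h
  · rw [max_eq_right (by linarith)]
    nlinarith
  · rw [max_eq_left (by linarith)]
    nlinarith [sq_nonneg (u - 2), sq_nonneg (u ^ 2 - 4),
      mul_nonneg (sub_nonneg.2 h) (sq_nonneg (u - 2))]

theorem le_integral_max_sum_mul_sub_half (d : ℕ) (a : Fin d → ℝ) (ha : ∑ i, a i ^ 2 = 1) :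
    2 ^ d / 64 ≤ ∫ x, max (∑ i, a i * x i - 1 / 2) 0 ∂cubeMeasure d := by
  have hquartic : 2 ^ d / 32 ≤
      ∫ x, (16 * (∑ i, a i * x i) ^ 2 - 4 - (∑ i, a i * x i) ^ 4) / 32 ∂cubeMeasure d := by
    have h4 := integral_sum_mul_pow_four_le d a
    rw [ha] at h4
    rw [integral_div, integral_sub, integral_sub, integral_const_mul, integral_const,
      cubeMeasure.real_univ, integral_sum_mul_sq, ha, smul_eq_mul]
    · linarith
    all_goals exact (by fun_prop : Continuous _).integrable_cubeMeasure
  have hsymm := integral_comp_neg_sum_mul d a fun u => max (u - 1 / 2) 0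
  have hmono := integral_mono (μ := cubeMeasure d)
    (by fun_prop : Continuous _).integrable_cubeMeasure
    (by fun_prop : Continuous _).integrable_cubeMeasure
    fun x => quartic_le_max_sub_half_add_max_neg_sub_half (∑ i, a i * x i)
  rw [integral_add (by fun_prop : Continuous _).integrable_cubeMeasure
    (by fun_prop : Continuous _).integrable_cubeMeasure] at hmono
  linarith

theorem le_setIntegral_sum_mul_sub (d : ℕ) (a : Fin d → ℝ) (ha : ∑ i, a i ^ 2 = 1) {t : ℝ}
    (ht : t ≤ 1 / 2) :
    2 ^ d / 64 ≤ ∫ x in (univ.pi fun _ => Icc (-1) 1) ∩ {x | t ≤ ∑ i, a i * x i},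
      (∑ i, a i * x i - t) := by
  set H : Set (Fin d → ℝ) := {x | t ≤ ∑ i, a i * x i}
  have hH : MeasurableSet H := measurableSet_le measurable_const (by fun_prop)
  rw [← setIntegral_indicator hH, ← cubeMeasure.eq_volume_restrict]
  refine (le_integral_max_sum_mul_sub_half d a ha).trans <|
    integral_mono (by fun_prop : Continuous _).integrable_cubeMeasure
      ((by fun_prop : Continuous _).integrable_cubeMeasure.indicator hH) fun x => ?_
  by_cases hx : x ∈ H
  · rw [indicator_of_mem hx]
    exact max_le (by linarith) (sub_nonneg.2 hx)
  · rw [indicator_of_notMem hx]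
    have hx : ∑ i, a i * x i < t := not_le.1 hx
    exact max_le (by linarith) le_rfl

theorem stmt8 :
    ∃ c : ℝ, 0 < c ∧
      ∀ (d : ℕ) (a : Fin d → ℝ), (∑ i, a i ^ 2 = 1) →
        ∀ t : ℝ, 0 ≤ t → t ≤ 1 / 2 →
          (∫ x in {x : Fin d → ℝ |
              (∀ i, x i ∈ Icc (-1 : ℝ) 1) ∧ ∑ i, a i * x i ≥ t}, ∑ i, a i * x i) /
            (volume {x : Fin d → ℝ |
              (∀ i, x i ∈ Icc (-1 : ℝ) 1) ∧ ∑ i, a i * x i ≥ t}).toReal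
          ≥ t + c := by
  refine ⟨1 / 64, by norm_num, fun d a ha t _ ht => ?_⟩
  have hA : {x : Fin d → ℝ | (∀ i, x i ∈ Icc (-1 : ℝ) 1) ∧ ∑ i, a i * x i ≥ t} =
      (univ.pi fun _ => Icc (-1) 1) ∩ {x | t ≤ ∑ i, a i * x i} := by
    ext x
    simp only [mem_inter_iff, mem_univ_pi, mem_ofPred_eq, ge_iff_le]
  have hvol : volume ((univ.pi fun _ => Icc (-1 : ℝ) 1) ∩ {x | t ≤ ∑ i, a i * x i}) ≤ 2 ^ d :=
    (measure_mono inter_subset_left).trans (volume_cube d).le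
  have hint : IntegrableOn (fun x => ∑ i, a i * x i) (univ.pi fun _ => Icc (-1 : ℝ) 1) := by
    rw [IntegrableOn, ← cubeMeasure.eq_volume_restrict]
    exact (by fun_prop : Continuous _).integrable_cubeMeasure
  rw [hA]
  exact add_le_setIntegral_div_measure (M := 2 ^ d) (hint.mono_set inter_subset_left)
    (ne_top_of_le_ne_top (by simp) hvol) (by norm_num) (by positivity)
    (by simpa using ENNReal.toReal_mono (by simp) hvol)
    (by linarith [le_setIntegral_sum_mul_sub d a ha ht])
end
end
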